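/- arXiv:1807.04022 — 2 statements merged into one kernel-verified Lean document; each statement's English description precedes it below -/
import Mathlib

section
/- Let K ⊂ ℝ^l be compact with Lebesgue measure μ, and let (ρ_n) be a sequence of probability measures on K, each absolutely continuous with respect to μ, with densities u_n ∈ L¹(K, μ). Then (u_n) converges weakly in L¹(K, μ) to some function h if and only if for every Borel set A ⊆ K the sequence (ρ_n(A)) converges to a finite limit; and in that case the limit set function η(A) := lim_n ρ_n(A) is a probability measure on K, absolutely continuous with respect to μ, with density h (i.e. η = μ.withDensity h is a homogeneous Young measure with density h). -/
open MeasureTheory Filter Topology Set ENNReal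

/-- `uₙ ⇀ h` weakly in `L¹(K, μ)`: the integrals against every bounded measurable function
(i.e. every element of `L^∞(K, μ)`) converge. -/
def WeakL1Tendsto {X : Type*} [MeasurableSpace X] (μ : Measure X)
    (u : ℕ → X → ℝ) (h : X → ℝ) : Prop :=
  ∀ g : X → ℝ, Measurable g → (∃ C : ℝ, ∀ x, |g x| ≤ C) →
    Tendsto (fun n => ∫ x, u n x * g x ∂μ) atTop (nhds (∫ x, h x * g x ∂μ))


open scoped symmDiff

namespace VHS

variable {α : Type*} [MeasurableSpace α] {μ : Measure α} [IsFiniteMeasure μ]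

noncomputable def indLp (μ : Measure α) [IsFiniteMeasure μ] (A : Set α) (hA : MeasurableSet A) :
    Lp ℝ 1 μ :=
  indicatorConstLp 1 hA (measure_ne_top μ A) (1 : ℝ)

lemma indLp_coeFn {A : Set α} (hA : MeasurableSet A) :
    (indLp μ A hA : α → ℝ) =ᵐ[μ] A.indicator (fun _ => (1:ℝ)) :=
  indicatorConstLp_coeFn

/-- The set of indicator functions inside `L¹`. -/
def indSet (μ : Measure α) [IsFiniteMeasure μ] : Set (Lp ℝ 1 μ) :=
  {f | ∃ A : Set α, ∃ hA : MeasurableSet A, f = indLp μ A hA}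

lemma isClosed_indSet : IsClosed (indSet μ) := by
  set_option synthInstance.maxHeartbeats 1000000 in
  refine IsSeqClosed.isClosed ?_
  intro f g hf hfg
  -- convergence in measure, then a.e. subsequence
  have hm : TendstoInMeasure μ (fun n => (f n : α → ℝ)) atTop g :=
    tendstoInMeasure_of_tendsto_Lp hfg
  obtain ⟨ns, -, hae⟩ := hm.exists_seq_tendsto_ae
  -- a.e., each f n takes values in {0,1}
  have h01 : ∀ᵐ x ∂μ, ∀ n, (f n : α → ℝ) x = 0 ∨ (f n : α → ℝ) x = 1 := by
    rw [ae_all_iff]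
    intro n
    obtain ⟨A, hA, hfA⟩ := hf n
    filter_upwards [hfA ▸ indLp_coeFn (μ := μ) hA] with x hx
    by_cases hxA : x ∈ A
    · right; rw [hx]; simp [hxA]
    · left; rw [hx]; simp [hxA]
  have hg01 : ∀ᵐ x ∂μ, (g : α → ℝ) x = 0 ∨ (g : α → ℝ) x = 1 := by
    filter_upwards [hae, h01] with x hx h01x
    have hmem : ∀ i, (f (ns i) : α → ℝ) x ∈ ({0, 1} : Set ℝ) := fun i => h01x (ns i)
    have hcl : IsClosed ({0, 1} : Set ℝ) := by
      exact (isClosed_singleton.union isClosed_singleton)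
    have := hcl.mem_of_tendsto hx (Eventually.of_forall hmem)
    simpa using this
  -- define the limit set
  set A : Set α := {x | (g : α → ℝ) x = 1} with hAdef
  have hA : MeasurableSet A := by
    have := (Lp.stronglyMeasurable g).measurable
    exact this (measurableSet_singleton 1)
  refine ⟨A, hA, ?_⟩
  apply Lp.ext (μ := μ)
  filter_upwards [hg01, indLp_coeFn (μ := μ) hA] with x hx hx2
  rw [hx2]
  rcases hx with hx | hx
  · have hxA : x ∉ A := by simp [hAdef, hx]
    simp [hx, hxA]
  · have hxA : x ∈ A := by simp [hAdef, hx]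
    simp [hx, hxA]

lemma dist_indLp {A B : Set α} (hA : MeasurableSet A) (hB : MeasurableSet B) :
    dist (indLp μ A hA) (indLp μ B hB) = (μ (A ∆ B)).toReal := by
  rw [indLp, indLp, dist_indicatorConstLp_eq_norm, norm_indicatorConstLp one_ne_zero one_ne_top]
  simp
  rfl

/-- Pairing of an integrable function with an `L¹` element. -/
noncomputable def pair (w : α → ℝ) (f : Lp ℝ 1 μ) : ℝ := ∫ x, w x * f x ∂μ

lemma pair_indLp {w : α → ℝ} (hw : Integrable w μ) {A : Set α} (hA : MeasurableSet A) :
    pair w (indLp μ A hA) = ∫ x in A, w x ∂μ := by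
  rw [pair]
  rw [integral_congr_ae ((indLp_coeFn hA).mono (fun x hx => by rw [hx]))]
  rw [← integral_indicator hA]
  congr 1
  ext x
  by_cases hx : x ∈ A <;> simp [hx]


/-- ε-δ absolute continuity of the integral of an integrable function. -/
lemma abscont {w : α → ℝ} (hw : Integrable w μ) {ε : ℝ} (hε : 0 < ε) :
    ∃ δ : ℝ, 0 < δ ∧ ∀ s : Set α, MeasurableSet s → μ s ≤ ENNReal.ofReal δ →
      ∫ x in s, |w x| ∂μ ≤ ε := by
  obtain ⟨δ, hδ, hδε⟩ := (memLp_one_iff_integrable.2 hw).eLpNorm_indicator_le le_rfl one_ne_top hε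
  refine ⟨δ, hδ, fun s hs hμs => ?_⟩
  have h1 : ∫ x in s, |w x| ∂μ = ∫ x, ‖s.indicator w x‖ ∂μ := by
    rw [← integral_indicator hs]
    congr 1
    ext x
    by_cases hx : x ∈ s <;> simp [hx, Real.norm_eq_abs]
  rw [h1, integral_norm_eq_lintegral_enorm (hw.aestronglyMeasurable.indicator hs)]
  rw [← eLpNorm_one_eq_lintegral_enorm]
  exact ENNReal.toReal_le_of_le_ofReal hε.le (hδε s hs hμs)

lemma setIntegral_sub_le {w : α → ℝ} (hw : Integrable w μ) {A B : Set α}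
    (hA : MeasurableSet A) (hB : MeasurableSet B) :
    |∫ x in A, w x ∂μ - ∫ x in B, w x ∂μ| ≤ ∫ x in A ∆ B, |w x| ∂μ := by
  have hint : ∀ s : Set α, IntegrableOn w s μ := fun s => hw.integrableOn
  have habs : ∀ s : Set α, IntegrableOn (fun x => |w x|) s μ := fun s => hw.abs.integrableOn
  have h1 : ∫ x in A, w x ∂μ = (∫ x in A ∩ B, w x ∂μ) + ∫ x in A \ B, w x ∂μ := by
    rw [← setIntegral_union (disjoint_sdiff_self_right.mono_left inter_subset_right)
      (hA.diff hB) (hint _) (hint _), inter_union_diff]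
  have h2 : ∫ x in B, w x ∂μ = (∫ x in A ∩ B, w x ∂μ) + ∫ x in B \ A, w x ∂μ := by
    conv_lhs => rw [show B = (A ∩ B) ∪ (B \ A) by rw [inter_comm, inter_union_diff]]
    rw [setIntegral_union (disjoint_sdiff_self_right.mono_left inter_subset_left)
      (hB.diff hA) (hint _) (hint _)]
  have h3 : ∫ x in A ∆ B, |w x| ∂μ = (∫ x in A \ B, |w x| ∂μ) + ∫ x in B \ A, |w x| ∂μ := by
    rw [Set.symmDiff_def, setIntegral_union disjoint_sdiff_sdiff (hB.diff hA) (habs _) (habs _)]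
  rw [h1, h2, h3]
  have e1 : |∫ x in A \ B, w x ∂μ| ≤ ∫ x in A \ B, |w x| ∂μ := by
    simpa [Real.norm_eq_abs] using norm_integral_le_integral_norm (μ := μ.restrict (A \ B)) w
  have e2 : |∫ x in B \ A, w x ∂μ| ≤ ∫ x in B \ A, |w x| ∂μ := by
    simpa [Real.norm_eq_abs] using norm_integral_le_integral_norm (μ := μ.restrict (B \ A)) w
  calc |(∫ x in A ∩ B, w x ∂μ) + ∫ x in A \ B, w x ∂μ -
      ((∫ x in A ∩ B, w x ∂μ) + ∫ x in B \ A, w x ∂μ)|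
      = |(∫ x in A \ B, w x ∂μ) - ∫ x in B \ A, w x ∂μ| := by ring_nf
    _ ≤ |∫ x in A \ B, w x ∂μ| + |∫ x in B \ A, w x ∂μ| := abs_sub _ _
    _ ≤ _ := add_le_add e1 e2

lemma continuousOn_pair {w : α → ℝ} (hw : Integrable w μ) :
    ContinuousOn (pair w) (indSet μ) := by
  rw [Metric.continuousOn_iff]
  rintro f ⟨A, hA, rfl⟩ ε hε
  obtain ⟨δ, hδ, hδε⟩ := abscont hw (half_pos hε)
  refine ⟨δ, hδ, ?_⟩
  rintro g ⟨B, hB, rfl⟩ hdist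
  rw [Real.dist_eq, pair_indLp hw hA, pair_indLp hw hB]
  have hμ : μ (B ∆ A) ≤ ENNReal.ofReal δ := by
    rw [dist_indLp hB hA] at hdist
    rw [← ENNReal.ofReal_toReal (measure_ne_top μ (B ∆ A))]
    exact ENNReal.ofReal_le_ofReal hdist.le
  calc |∫ x in B, w x ∂μ - ∫ x in A, w x ∂μ| ≤ ∫ x in B ∆ A, |w x| ∂μ :=
        setIntegral_sub_le hw hB hA
    _ ≤ ε / 2 := hδε _ (hB.symmDiff hA) hμ
    _ < ε := half_lt_self hε

lemma abscont_finite {u : ℕ → α → ℝ} (hu : ∀ n, Integrable (u n) μ) {ε : ℝ} (hε : 0 < ε)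
    (k : ℕ) :
    ∃ δ : ℝ, 0 < δ ∧ ∀ n ≤ k, ∀ B : Set α, MeasurableSet B → μ B ≤ ENNReal.ofReal δ →
      ∫ x in B, |u n x| ∂μ ≤ ε := by
  induction k with
  | zero =>
    obtain ⟨δ, hδ, hδε⟩ := abscont (hu 0) hε
    exact ⟨δ, hδ, fun n hn B hB hμB => by rw [Nat.le_zero.mp hn]; exact hδε B hB hμB⟩
  | succ k ih =>
    obtain ⟨δ₁, hδ₁, h₁⟩ := ih
    obtain ⟨δ₂, hδ₂, h₂⟩ := abscont (hu (k+1)) hε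
    refine ⟨min δ₁ δ₂, lt_min hδ₁ hδ₂, fun n hn B hB hμB => ?_⟩
    rcases Nat.lt_succ_iff_lt_or_eq.mp (Nat.lt_succ_of_le hn) with h | rfl
    · exact h₁ n (Nat.lt_succ_iff.mp h) B hB
        (hμB.trans (ENNReal.ofReal_le_ofReal (min_le_left _ _)))
    · exact h₂ B hB (hμB.trans (ENNReal.ofReal_le_ofReal (min_le_right _ _)))

set_option synthInstance.maxHeartbeats 1000000 in
/-- Core Vitali–Hahn–Saks equi-absolute-continuity, via Baire category. -/
lemma equiAbsCont {u : ℕ → α → ℝ} (hu : ∀ n, Integrable (u n) μ)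
    (hconv : ∀ A : Set α, MeasurableSet A →
      ∃ c : ℝ, Tendsto (fun n => ∫ x in A, u n x ∂μ) atTop (𝓝 c))
    {ε : ℝ} (hε : 0 < ε) :
    ∃ δ : ℝ, 0 < δ ∧ ∀ B : Set α, MeasurableSet B → μ B ≤ ENNReal.ofReal δ →
      ∀ n, |∫ x in B, u n x ∂μ| ≤ ε := by
  have hε3 : 0 < ε / 3 := by linarith
  haveI : CompleteSpace (indSet μ) := (isClosed_indSet (μ := μ)).completeSpace_coe
  -- the closed pieces
  set F : ℕ → Set (indSet μ) := fun k =>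
    {f | ∀ m, k ≤ m → ∀ n, k ≤ n → |pair (u m) f.1 - pair (u n) f.1| ≤ ε / 3} with hF
  have hFclosed : ∀ k, IsClosed (F k) := by
    intro k
    have : F k = ⋂ (m) (n), {f : indSet μ |
        k ≤ m → k ≤ n → |pair (u m) f.1 - pair (u n) f.1| ≤ ε / 3} := by
      ext f; simp only [hF, mem_setOf_eq, mem_iInter]; tauto
    rw [this]
    refine isClosed_iInter fun m => isClosed_iInter fun n => ?_
    by_cases hm : k ≤ m
    · by_cases hn : k ≤ n
      · have hcont : Continuous fun f : indSet μ =>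
            |pair (u m) f.1 - pair (u n) f.1| :=
          (((continuousOn_pair (hu m)).restrict).sub
            ((continuousOn_pair (hu n)).restrict)).abs
        have : {f : indSet μ | k ≤ m → k ≤ n →
            |pair (u m) f.1 - pair (u n) f.1| ≤ ε / 3} =
            (fun f : indSet μ => |pair (u m) f.1 - pair (u n) f.1|) ⁻¹' Iic (ε / 3) := by
          ext f; simp [hm, hn]
        rw [this]
        exact IsClosed.preimage hcont isClosed_Iic
      · have : {f : indSet μ | k ≤ m → k ≤ n →
            |pair (u m) f.1 - pair (u n) f.1| ≤ ε / 3} = univ := by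
          ext f; simp [hn]
        rw [this]; exact isClosed_univ
    · have : {f : indSet μ | k ≤ m → k ≤ n →
          |pair (u m) f.1 - pair (u n) f.1| ≤ ε / 3} = univ := by
        ext f; simp [hm]
      rw [this]; exact isClosed_univ
  have hFunion : ⋃ k, F k = univ := by
    rw [eq_univ_iff_forall]
    intro f
    obtain ⟨A, hA, hfA⟩ := f.2
    obtain ⟨c, hc⟩ := hconv A hA
    have hcauchy : CauchySeq fun n => ∫ x in A, u n x ∂μ := hc.cauchySeq
    rw [Metric.cauchySeq_iff] at hcauchy
    obtain ⟨k, hk⟩ := hcauchy (ε / 3) hε3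
    refine mem_iUnion.mpr ⟨k, ?_⟩
    intro m hm n hn
    rw [hfA, pair_indLp (hu m) hA, pair_indLp (hu n) hA]
    exact (Real.dist_eq _ _ ▸ (hk m hm n hn)).le
  haveI : Nonempty (indSet μ) := ⟨⟨indLp μ ∅ MeasurableSet.empty, ∅, MeasurableSet.empty, rfl⟩⟩
  obtain ⟨k, hk⟩ := nonempty_interior_of_iUnion_of_closed hFclosed hFunion
  obtain ⟨f₀, hf₀⟩ := hk
  obtain ⟨r, hr, hball⟩ := Metric.mem_nhds_iff.mp (mem_interior_iff_mem_nhds.mp hf₀)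
  obtain ⟨A₀, hA₀, hf₀A⟩ := f₀.2
  -- uniform Cauchy estimate on small sets
  have key : ∀ B : Set α, MeasurableSet B → μ B ≤ ENNReal.ofReal (r / 2) →
      ∀ m, k ≤ m → ∀ n, k ≤ n →
      |(∫ x in B, u m x ∂μ) - ∫ x in B, u n x ∂μ| ≤ 2 * (ε / 3) := by
    intro B hB hμB m hm n hn
    have hdist : ∀ (C : Set α) (hC : MeasurableSet C), C ∆ A₀ ⊆ B →
        (⟨indLp μ C hC, C, hC, rfl⟩ : indSet μ) ∈ F k := by
      intro C hC hsub
      apply hball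
      rw [Metric.mem_ball, Subtype.dist_eq, hf₀A, dist_indLp hC hA₀]
      calc (μ (C ∆ A₀)).toReal ≤ (μ B).toReal :=
            ENNReal.toReal_mono (measure_ne_top μ B) (measure_mono hsub)
        _ ≤ r / 2 := ENNReal.toReal_le_of_le_ofReal (by linarith) hμB
        _ < r := by linarith
    have h₁ : ((A₀ ∪ B) ∆ A₀) ⊆ B := by
      intro x hx; rw [Set.mem_symmDiff] at hx; rcases hx with ⟨hx1, hx2⟩ | ⟨hx1, hx2⟩
      · exact hx1.resolve_left hx2
      · exact absurd (Or.inl hx1) hx2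
    have h₂ : ((A₀ \ B) ∆ A₀) ⊆ B := by
      intro x hx; rw [Set.mem_symmDiff] at hx; rcases hx with ⟨hx1, hx2⟩ | ⟨hx1, hx2⟩
      · exact absurd hx1.1 hx2
      · by_contra hxB; exact hx2 ⟨hx1, hxB⟩
    have m₁ := hdist (A₀ ∪ B) (hA₀.union hB) h₁ m hm n hn
    have m₂ := hdist (A₀ \ B) (hA₀.diff hB) h₂ m hm n hn
    simp only [pair_indLp (hu m) (hA₀.union hB), pair_indLp (hu n) (hA₀.union hB),
      pair_indLp (hu m) (hA₀.diff hB), pair_indLp (hu n) (hA₀.diff hB)] at m₁ m₂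
    have hsplit : ∀ j, ∫ x in A₀ ∪ B, u j x ∂μ =
        (∫ x in A₀ \ B, u j x ∂μ) + ∫ x in B, u j x ∂μ := by
      intro j
      rw [← setIntegral_union disjoint_sdiff_self_left hB
        (hu j).integrableOn (hu j).integrableOn, diff_union_self]
    have em := hsplit m; have en := hsplit n
    have : (∫ x in B, u m x ∂μ) - ∫ x in B, u n x ∂μ =
        ((∫ x in A₀ ∪ B, u m x ∂μ) - ∫ x in A₀ ∪ B, u n x ∂μ) -
        ((∫ x in A₀ \ B, u m x ∂μ) - ∫ x in A₀ \ B, u n x ∂μ) := by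
      rw [em, en]; ring
    rw [this]
    calc _ ≤ |(∫ x in A₀ ∪ B, u m x ∂μ) - ∫ x in A₀ ∪ B, u n x ∂μ| +
        |(∫ x in A₀ \ B, u m x ∂μ) - ∫ x in A₀ \ B, u n x ∂μ| := abs_sub _ _
      _ ≤ 2 * (ε / 3) := by linarith
  -- combine with absolute continuity of u_0, ..., u_k
  obtain ⟨δ', hδ', hfin⟩ := abscont_finite hu hε3 k
  refine ⟨min (r / 2) δ', lt_min (by linarith) hδ', fun B hB hμB n => ?_⟩
  have hμB₁ : μ B ≤ ENNReal.ofReal (r / 2) :=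
    hμB.trans (ENNReal.ofReal_le_ofReal (min_le_left _ _))
  have hμB₂ : μ B ≤ ENNReal.ofReal δ' :=
    hμB.trans (ENNReal.ofReal_le_ofReal (min_le_right _ _))
  have habs : ∀ j ≤ k, |∫ x in B, u j x ∂μ| ≤ ε / 3 := by
    intro j hj
    calc |∫ x in B, u j x ∂μ| ≤ ∫ x in B, |u j x| ∂μ := by
          simpa [Real.norm_eq_abs] using norm_integral_le_integral_norm (μ := μ.restrict B) (u j)
      _ ≤ ε / 3 := hfin j hj B hB hμB₂
  rcases le_or_gt n k with hn | hn
  · linarith [habs n hn]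
  · have h1 := habs k le_rfl
    have h2 := key B hB hμB₁ n hn.le k le_rfl
    calc |∫ x in B, u n x ∂μ| ≤
        |(∫ x in B, u n x ∂μ) - ∫ x in B, u k x ∂μ| + |∫ x in B, u k x ∂μ| := by
          have := abs_sub_abs_le_abs_sub (∫ x in B, u n x ∂μ) (∫ x in B, u k x ∂μ)
          linarith
      _ ≤ 2 * (ε / 3) + ε / 3 := add_le_add h2 h1
      _ ≤ ε := by linarith

/-- From setwise convergence of the integrals, produce the limit density. -/
lemma exists_limit_density {u : ℕ → α → ℝ} (hu : ∀ n, Integrable (u n) μ)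
    (hpos : ∀ n x, 0 ≤ u n x)
    (hconv : ∀ A : Set α, MeasurableSet A →
      ∃ c : ℝ, Tendsto (fun n => ∫ x in A, u n x ∂μ) atTop (𝓝 c)) :
    ∃ h : α → ℝ, Integrable h μ ∧ (∀ x, 0 ≤ h x) ∧
      ∀ A : Set α, MeasurableSet A →
        Tendsto (fun n => ∫ x in A, u n x ∂μ) atTop (𝓝 (∫ x in A, h x ∂μ)) := by
  classical
  set L : Set α → ℝ := fun A => if hA : MeasurableSet A then (hconv A hA).choose else 0 with hLdef
  have hL : ∀ A : Set α, MeasurableSet A →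
      Tendsto (fun n => ∫ x in A, u n x ∂μ) atTop (𝓝 (L A)) := by
    intro A hA
    simpa [hLdef, dif_pos hA] using (hconv A hA).choose_spec
  have hL0 : ∀ A : Set α, MeasurableSet A → 0 ≤ L A := fun A hA =>
    ge_of_tendsto' (hL A hA) fun n => setIntegral_nonneg hA fun x _ => hpos n x
  have hLadd : ∀ A B : Set α, MeasurableSet A → MeasurableSet B → Disjoint A B →
      L (A ∪ B) = L A + L B := by
    intro A B hA hB hAB
    have h1 : Tendsto (fun n => ∫ x in A ∪ B, u n x ∂μ) atTop (𝓝 (L A + L B)) := by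
      refine Tendsto.congr (fun n => ?_) ((hL A hA).add (hL B hB))
      rw [setIntegral_union hAB hB (hu n).integrableOn (hu n).integrableOn]
    exact tendsto_nhds_unique (hL _ (hA.union hB)) h1
  have hLunion : ∀ (f : ℕ → Set α), (∀ i, MeasurableSet (f i)) → Pairwise (Function.onFun Disjoint f) →
      HasSum (fun i => L (f i)) (L (⋃ i, f i)) := by
    intro f hf hdisj
    set head : ℕ → Set α := fun N => ⋃ i ∈ Finset.range N, f i with hheaddef
    set tail : ℕ → Set α := fun N => ⋃ (i) (_ : N ≤ i), f i with htaildef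
    have hheadm : ∀ N, MeasurableSet (head N) :=
      fun N => (Finset.range N).measurableSet_biUnion fun i _ => hf i
    have htailm : ∀ N, MeasurableSet (tail N) :=
      fun N => MeasurableSet.biUnion (to_countable _) fun i _ => hf i
    have hdisjht : ∀ N, Disjoint (head N) (tail N) := by
      intro N
      rw [Set.disjoint_left]
      intro x hxh hxt
      simp only [hheaddef, htaildef, mem_iUnion, Finset.mem_range, exists_prop] at hxh hxt
      obtain ⟨i, hiN, hxi⟩ := hxh
      obtain ⟨j, hjN, hxj⟩ := hxt
      have hij : i ≠ j := by omega
      exact Set.disjoint_left.mp (hdisj hij) hxi hxj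
    have hsplit : ∀ N, (⋃ i, f i) = head N ∪ tail N := by
      intro N
      ext x
      simp only [hheaddef, htaildef, mem_iUnion, mem_union, Finset.mem_range, exists_prop]
      constructor
      · rintro ⟨i, hxi⟩
        rcases lt_or_ge i N with h | h
        · exact Or.inl ⟨i, h, hxi⟩
        · exact Or.inr ⟨i, h, hxi⟩
      · rintro (⟨i, _, hxi⟩ | ⟨i, _, hxi⟩) <;> exact ⟨i, hxi⟩
    have hheadL : ∀ N, L (head N) = ∑ i ∈ Finset.range N, L (f i) := by
      intro N
      have h1 : Tendsto (fun n => ∫ x in head N, u n x ∂μ) atTop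
          (𝓝 (∑ i ∈ Finset.range N, L (f i))) := by
        have h2 : Tendsto (fun n => ∑ i ∈ Finset.range N, ∫ x in f i, u n x ∂μ) atTop
            (𝓝 (∑ i ∈ Finset.range N, L (f i))) :=
          tendsto_finset_sum _ fun i _ => hL (f i) (hf i)
        refine h2.congr fun n => ?_
        rw [← integral_biUnion_finset (Finset.range N) (fun i _ => hf i)
          (fun i _ j _ hij => hdisj hij) (fun i _ => (hu n).integrableOn)]
      exact tendsto_nhds_unique (hL _ (hheadm N)) h1
    have htail0 : Tendsto (fun N => L (tail N)) atTop (𝓝 0) := by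
      have hμtail : Tendsto (fun N => μ (tail N)) atTop (𝓝 0) := by
        have hanti : Antitone tail := by
          intro N M hNM x hx
          simp only [htaildef, mem_iUnion, exists_prop] at hx ⊢
          obtain ⟨i, hi, hxi⟩ := hx
          exact ⟨i, hNM.trans hi, hxi⟩
        have hempty : ⋂ N, tail N = (∅ : Set α) := by
          ext x
          simp only [mem_iInter, mem_empty_iff_false, iff_false]
          intro hcon
          have h0 := hcon 0
          simp only [htaildef, mem_iUnion, exists_prop] at h0
          obtain ⟨i, -, hxi⟩ := h0
          have h1 := hcon (i + 1)
          simp only [htaildef, mem_iUnion, exists_prop] at h1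
          obtain ⟨j, hji, hxj⟩ := h1
          exact Set.disjoint_left.mp (hdisj (by omega : i ≠ j)) hxi hxj
        have h3 := tendsto_measure_iInter_atTop
          (fun N => (htailm N).nullMeasurableSet) hanti ⟨0, measure_ne_top μ _⟩
        rw [hempty] at h3
        simpa [Function.comp_def] using h3
      rw [Metric.tendsto_atTop]
      intro ε hε
      obtain ⟨δ, hδ, hδε⟩ := equiAbsCont hu hconv (half_pos hε)
      have hev : ∀ᶠ N in atTop, μ (tail N) < ENNReal.ofReal δ :=
        hμtail.eventually_lt_const (ENNReal.ofReal_pos.mpr hδ)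
      obtain ⟨N₀, hN₀⟩ := eventually_atTop.mp hev
      refine ⟨N₀, fun N hN => ?_⟩
      have hbd : |L (tail N)| ≤ ε / 2 := by
        have habs : Tendsto (fun n => |∫ x in tail N, u n x ∂μ|) atTop (𝓝 |L (tail N)|) :=
          (hL _ (htailm N)).abs
        exact le_of_tendsto habs (Eventually.of_forall fun n =>
          hδε _ (htailm N) (hN₀ N hN).le n)
      rw [Real.dist_eq, sub_zero]
      linarith
    have hmain : Tendsto (fun N => ∑ i ∈ Finset.range N, L (f i)) atTop (𝓝 (L (⋃ i, f i))) := by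
      have hdecomp : ∀ N, L (⋃ i, f i) = (∑ i ∈ Finset.range N, L (f i)) + L (tail N) := by
        intro N
        rw [← hheadL N, ← hLadd _ _ (hheadm N) (htailm N) (hdisjht N), ← hsplit N]
      have heq : (fun N => ∑ i ∈ Finset.range N, L (f i)) =
          fun N => L (⋃ i, f i) - L (tail N) := by
        funext N
        rw [hdecomp N]
        ring
      rw [heq]
      simpa using tendsto_const_nhds.sub htail0
    exact (hasSum_iff_tendsto_nat_of_nonneg (fun i => hL0 _ (hf i)) _).mpr hmain
  -- define the limit measure
  have hLempty : L ∅ = 0 := by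
    refine tendsto_nhds_unique (hL ∅ MeasurableSet.empty) ?_
    simpa using (tendsto_const_nhds : Tendsto (fun _ : ℕ => (0:ℝ)) atTop (𝓝 0))
  set η : Measure α := Measure.ofMeasurable (fun A _ => ENNReal.ofReal (L A))
    (by beta_reduce; rw [hLempty, ENNReal.ofReal_zero])
    (by
      intro f hf hdisj
      have hs := hLunion f hf hdisj
      rw [← ENNReal.ofReal_tsum_of_nonneg (fun i => hL0 _ (hf i)) hs.summable, hs.tsum_eq])
    with hηdef
  have hηap : ∀ A : Set α, MeasurableSet A → η A = ENNReal.ofReal (L A) := fun A hA => by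
    rw [hηdef]; exact Measure.ofMeasurable_apply A hA
  haveI : IsFiniteMeasure η := ⟨by rw [hηap univ MeasurableSet.univ]; exact ofReal_lt_top⟩
  have hac : η ≪ μ := by
    refine Measure.AbsolutelyContinuous.mk fun s hs hμs => ?_
    have hz : ∀ n, ∫ x in s, u n x ∂μ = 0 := fun n => by
      rw [Measure.restrict_eq_zero.mpr hμs, integral_zero_measure]
    have hLs : L s = 0 := by
      refine tendsto_nhds_unique (hL s hs) ?_
      simpa [hz] using (tendsto_const_nhds : Tendsto (fun _ : ℕ => (0:ℝ)) atTop (𝓝 0))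
    rw [hηap s hs, hLs, ENNReal.ofReal_zero]
  refine ⟨fun x => (η.rnDeriv μ x).toReal, Measure.integrable_toReal_rnDeriv,
    fun x => ENNReal.toReal_nonneg, ?_⟩
  intro A hA
  have key : ∫ x in A, (η.rnDeriv μ x).toReal ∂μ = L A := by
    rw [integral_toReal ((η.measurable_rnDeriv μ).aemeasurable)
      (ae_restrict_of_ae (η.rnDeriv_lt_top μ))]
    have h4 : ∫⁻ x in A, η.rnDeriv μ x ∂μ = η A := by
      rw [← withDensity_apply _ hA, Measure.withDensity_rnDeriv_eq η μ hac]
    rw [h4, hηap A hA, ENNReal.toReal_ofReal (hL0 A hA)]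
  rw [key]
  exact hL A hA

/-- Setwise convergence of integrals upgrades to weak `L¹` convergence against bounded
measurable functions, given a uniform bound on the total integrals. -/
lemma weak_of_setwise {u : ℕ → α → ℝ} {h : α → ℝ} {M : ℝ}
    (hu : ∀ n, Integrable (u n) μ) (hupos : ∀ n x, 0 ≤ u n x)
    (hh : Integrable h μ) (hhpos : ∀ x, 0 ≤ h x)
    (huM : ∀ n, ∫ x, u n x ∂μ ≤ M) (hhM : ∫ x, h x ∂μ ≤ M)
    (hlim : ∀ A : Set α, MeasurableSet A →
      Tendsto (fun n => ∫ x in A, u n x ∂μ) atTop (𝓝 (∫ x in A, h x ∂μ)))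
    (g : α → ℝ) (hg : Measurable g) (hgb : ∃ C : ℝ, ∀ x, |g x| ≤ C) :
    Tendsto (fun n => ∫ x, u n x * g x ∂μ) atTop (𝓝 (∫ x, h x * g x ∂μ)) := by
  obtain ⟨C, hC⟩ := hgb
  have hM0 : 0 ≤ M := le_trans (integral_nonneg hhpos) hhM
  rw [Metric.tendsto_atTop]
  intro ε hε
  set ε' : ℝ := ε / (3 * (M + 1)) with hε'def
  have hε' : 0 < ε' := by positivity
  -- the grid
  set J : Finset ℤ := Finset.Icc ⌊-C / ε'⌋ ⌊C / ε'⌋ with hJdef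
  set B : ℤ → Set α := fun j => {x | ⌊g x / ε'⌋ = j} with hBdef
  have hBm : ∀ j, MeasurableSet (B j) :=
    fun j => (hg.div_const ε').floor (measurableSet_singleton j)
  have hBdisj : (↑J : Set ℤ).Pairwise (Function.onFun Disjoint B) := by
    intro i _ j _ hij
    rw [Function.onFun, Set.disjoint_left]
    intro x hxi hxj
    exact hij ((hxi : _ = i).symm.trans hxj)
  have hcover : (⋃ j ∈ J, B j) = univ := by
    rw [eq_univ_iff_forall]
    intro x
    have h1 : -C ≤ g x := (abs_le.mp (hC x)).1
    have h2 : g x ≤ C := (abs_le.mp (hC x)).2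
    refine mem_iUnion₂.mpr ⟨⌊g x / ε'⌋, ?_, rfl⟩
    rw [hJdef, Finset.mem_Icc]
    exact ⟨Int.floor_le_floor (by gcongr), Int.floor_le_floor (by gcongr)⟩
  -- main approximation estimate
  have hkey : ∀ w : α → ℝ, Integrable w μ → (∀ x, 0 ≤ w x) →
      |(∫ x, w x * g x ∂μ) - ∑ j ∈ J, (ε' * j) * ∫ x in B j, w x ∂μ| ≤ ε' * ∫ x, w x ∂μ := by
    intro w hw hwpos
    have hwg : Integrable (fun x => w x * g x) μ := by
      have h1 : Integrable (fun x => g x * w x) μ :=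
        hw.bdd_mul hg.aestronglyMeasurable (Eventually.of_forall fun x => by
          simpa [Real.norm_eq_abs] using hC x)
      simpa [mul_comm] using h1
    have hsplitg : ∫ x, w x * g x ∂μ = ∑ j ∈ J, ∫ x in B j, w x * g x ∂μ := by
      have := integral_biUnion_finset J (fun j _ => hBm j) hBdisj
        (fun j _ => hwg.integrableOn)
      rw [hcover, Measure.restrict_univ] at this
      exact this
    have hsplitw : ∫ x, w x ∂μ = ∑ j ∈ J, ∫ x in B j, w x ∂μ := by
      have := integral_biUnion_finset J (fun j _ => hBm j) hBdisj
        (fun j _ => hw.integrableOn)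
      rw [hcover, Measure.restrict_univ] at this
      exact this
    rw [hsplitg, hsplitw, ← Finset.sum_sub_distrib, Finset.mul_sum]
    refine (Finset.abs_sum_le_sum_abs _ _).trans (Finset.sum_le_sum fun j _ => ?_)
    -- single piece estimate
    have hint1 : IntegrableOn (fun x => w x * g x) (B j) μ := hwg.integrableOn
    have hint2 : IntegrableOn (fun x => ε' * j * w x) (B j) μ :=
      ((hw.const_mul (ε' * j)).integrableOn)
    have hsub : (∫ x in B j, w x * g x ∂μ) - (ε' * j) * ∫ x in B j, w x ∂μ =
        ∫ x in B j, (w x * g x - ε' * j * w x) ∂μ := by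
      rw [integral_sub hint1 hint2, integral_const_mul]
    rw [hsub]
    have habs : |∫ x in B j, (w x * g x - ε' * j * w x) ∂μ| ≤
        ∫ x in B j, |w x * g x - ε' * j * w x| ∂μ := by
      simpa [Real.norm_eq_abs] using
        norm_integral_le_integral_norm (μ := μ.restrict (B j))
          (fun x => w x * g x - ε' * j * w x)
    refine habs.trans ?_
    have hmono : ∫ x in B j, |w x * g x - ε' * j * w x| ∂μ ≤ ∫ x in B j, ε' * w x ∂μ := by
      refine setIntegral_mono_on (hint1.sub hint2).abs ((hw.const_mul ε').integrableOn)
        (hBm j) fun x hx => ?_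
      have hfl : ⌊g x / ε'⌋ = j := hx
      have hlow : (j : ℝ) ≤ g x / ε' := by rw [← hfl]; exact Int.floor_le _
      have hhigh : g x / ε' < j + 1 := by rw [← hfl]; exact Int.lt_floor_add_one _
      have hlow' : ε' * j ≤ g x := by
        rw [mul_comm, ← le_div_iff₀ hε']
        exact hlow
      have hhigh' : g x < ε' * (j + 1) := by
        rw [mul_comm, ← div_lt_iff₀ hε']
        exact hhigh
      have heq : |w x * g x - ε' * j * w x| = w x * |g x - ε' * j| := by
        rw [show w x * g x - ε' * j * w x = w x * (g x - ε' * j) by ring, abs_mul,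
          abs_of_nonneg (hwpos x)]
      rw [heq]
      have : |g x - ε' * j| ≤ ε' := abs_le.mpr ⟨by linarith, by nlinarith⟩
      calc w x * |g x - ε' * j| ≤ w x * ε' :=
            mul_le_mul_of_nonneg_left this (hwpos x)
        _ = ε' * w x := mul_comm _ _
    refine hmono.trans_eq ?_
    rw [integral_const_mul]
  -- convergence of the grid sums
  have hT : Tendsto (fun n => ∑ j ∈ J, (ε' * j) * ∫ x in B j, u n x ∂μ) atTop
      (𝓝 (∑ j ∈ J, (ε' * j) * ∫ x in B j, h x ∂μ)) :=
    tendsto_finset_sum _ fun j _ => (hlim (B j) (hBm j)).const_mul _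
  rw [Metric.tendsto_atTop] at hT
  obtain ⟨N, hN⟩ := hT (ε / 3) (by positivity)
  refine ⟨N, fun n hn => ?_⟩
  have k1 := hkey (u n) (hu n) (hupos n)
  have k2 := hkey h hh hhpos
  have hb : ε' * M ≤ ε / 3 := by
    rw [hε'def, div_mul_eq_mul_div, div_le_div_iff₀ (by positivity) (by norm_num)]
    nlinarith
  have b1 : ε' * ∫ x, u n x ∂μ ≤ ε / 3 :=
    le_trans (mul_le_mul_of_nonneg_left (huM n) hε'.le) hb
  have b2 : ε' * ∫ x, h x ∂μ ≤ ε / 3 :=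
    le_trans (mul_le_mul_of_nonneg_left hhM hε'.le) hb
  have b3 := hN n hn
  rw [Real.dist_eq] at b3 ⊢
  set Tn := ∑ j ∈ J, (ε' * j) * ∫ x in B j, u n x ∂μ
  set Th := ∑ j ∈ J, (ε' * j) * ∫ x in B j, h x ∂μ
  calc |(∫ x, u n x * g x ∂μ) - ∫ x, h x * g x ∂μ| ≤
      |(∫ x, u n x * g x ∂μ) - Tn| + |Tn - Th| + |Th - ∫ x, h x * g x ∂μ| := by
        have t1 := abs_sub_le (∫ x, u n x * g x ∂μ) Tn (∫ x, h x * g x ∂μ)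
        have t2 := abs_sub_le Tn Th (∫ x, h x * g x ∂μ)
        linarith
    _ < ε / 3 + ε / 3 + ε / 3 := by
        have k2' : |Th - ∫ x, h x * g x ∂μ| ≤ ε' * ∫ x, h x ∂μ := by
          rw [abs_sub_comm]; exact k2
        have hlt : |Tn - Th| < ε / 3 := b3
        have h1 : |(∫ x, u n x * g x ∂μ) - Tn| ≤ ε / 3 := le_trans k1 b1
        have h2 : |Th - ∫ x, h x * g x ∂μ| ≤ ε / 3 := le_trans k2' b2
        linarith
    _ = ε := by ring

end VHS

/-- Let `K ⊂ ℝˡ` be compact with Lebesgue measure `μ`, and `(ρₙ)` a sequence of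
`μ`-absolutely continuous homogeneous Young measures (probability measures)
`ρₙ = μ.withDensity uₙ` with densities `uₙ ∈ L¹(K, μ)`. Then `(uₙ)` converges weakly in
`L¹(K, μ)` to some `h` if and only if for every Borel set `A ⊆ K` the sequence `ρₙ(A)`
converges to a finite limit; and in that case the limit set function is a homogeneous Young
measure (a probability measure) absolutely continuous with respect to `μ` with density `h`,
namely `μ.withDensity h`. -/
theorem homYoungMeasures_weak_conv_iff_densities_weak_conv
    {l : ℕ} (K : Set (Fin l → ℝ)) (hK : IsCompact K)
    (μ : Measure (Fin l → ℝ)) (hμ : μ = volume.restrict K)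
    (u : ℕ → (Fin l → ℝ) → ℝ)
    (hu : ∀ n, Integrable (u n) μ) (hupos : ∀ n y, 0 ≤ u n y)
    (ρ : ℕ → Measure (Fin l → ℝ))
    (hρ : ∀ n, ρ n = μ.withDensity (fun y => ENNReal.ofReal (u n y)))
    (hprob : ∀ n, IsProbabilityMeasure (ρ n)) :
    ((∃ h : (Fin l → ℝ) → ℝ, Integrable h μ ∧ WeakL1Tendsto μ u h)
      ↔ ∀ A : Set (Fin l → ℝ), MeasurableSet A →
          ∃ c : ℝ≥0∞, c < ⊤ ∧ Tendsto (fun n => ρ n A) atTop (nhds c))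
    ∧ ∀ h : (Fin l → ℝ) → ℝ, Integrable h μ → WeakL1Tendsto μ u h →
        IsProbabilityMeasure (μ.withDensity (fun y => ENNReal.ofReal (h y)))
        ∧ ∀ A : Set (Fin l → ℝ), MeasurableSet A →
            Tendsto (fun n => ρ n A) atTop
              (nhds (μ.withDensity (fun y => ENNReal.ofReal (h y)) A)) := by
  haveI : IsFiniteMeasure μ := by
    refine ⟨?_⟩
    rw [hμ, Measure.restrict_apply_univ]
    exact hK.measure_lt_top
  -- `ρ n A` as a real integral
  have hρA : ∀ n (A : Set (Fin l → ℝ)), MeasurableSet A →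
      ρ n A = ENNReal.ofReal (∫ x in A, u n x ∂μ) := by
    intro n A hA
    rw [hρ n, withDensity_apply _ hA,
      ← ofReal_integral_eq_lintegral_ofReal ((hu n).restrict)
        (Eventually.of_forall fun x => hupos n x)]
  have huint1 : ∀ n, ∫ x, u n x ∂μ = 1 := by
    intro n
    have h1 : ρ n univ = 1 := measure_univ
    rw [hρA n univ MeasurableSet.univ, Measure.restrict_univ] at h1
    have h2 : (ENNReal.ofReal (∫ x, u n x ∂μ)).toReal = 1 := by rw [h1]; simp
    rwa [ENNReal.toReal_ofReal (integral_nonneg fun x => hupos n x)] at h2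
  -- indicator pairing identity
  have hindpair : ∀ (w : (Fin l → ℝ) → ℝ) (A : Set (Fin l → ℝ)), MeasurableSet A →
      ∫ x, w x * A.indicator (fun _ => (1:ℝ)) x ∂μ = ∫ x in A, w x ∂μ := by
    intro w A hA
    rw [← integral_indicator hA]
    congr 1
    ext x
    by_cases hx : x ∈ A <;> simp [hx]
  -- Part 2
  have part2 : ∀ h : (Fin l → ℝ) → ℝ, Integrable h μ → WeakL1Tendsto μ u h →
      IsProbabilityMeasure (μ.withDensity (fun y => ENNReal.ofReal (h y)))
      ∧ ∀ A : Set (Fin l → ℝ), MeasurableSet A →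
          Tendsto (fun n => ρ n A) atTop
            (nhds (μ.withDensity (fun y => ENNReal.ofReal (h y)) A)) := by
    intro h hint hweak
    have hresA : ∀ A : Set (Fin l → ℝ), MeasurableSet A →
        Tendsto (fun n => ∫ x in A, u n x ∂μ) atTop (𝓝 (∫ x in A, h x ∂μ)) := by
      intro A hA
      have hmeas : Measurable (A.indicator (fun _ => (1:ℝ))) :=
        measurable_const.indicator hA
      have hbd : ∃ C : ℝ, ∀ x, |A.indicator (fun _ => (1:ℝ)) x| ≤ C := by
        refine ⟨1, fun x => ?_⟩
        by_cases hx : x ∈ A <;> simp [hx]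
      have := hweak _ hmeas hbd
      simpa only [hindpair (u _) A hA, hindpair h A hA] using this
    have hh0 : 0 ≤ᵐ[μ] h := by
      refine ae_nonneg_of_forall_setIntegral_nonneg hint fun s hs _ => ?_
      exact ge_of_tendsto (hresA s hs)
        (Eventually.of_forall fun n => setIntegral_nonneg hs fun x _ => hupos n x)
    have hwdA : ∀ A : Set (Fin l → ℝ), MeasurableSet A →
        μ.withDensity (fun y => ENNReal.ofReal (h y)) A =
          ENNReal.ofReal (∫ x in A, h x ∂μ) := by
      intro A hA
      rw [withDensity_apply _ hA,
        ← ofReal_integral_eq_lintegral_ofReal (hint.restrict) (ae_restrict_of_ae hh0)]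
    have hinth1 : ∫ x, h x ∂μ = 1 := by
      have htu := hresA univ MeasurableSet.univ
      simp only [Measure.restrict_univ] at htu
      refine tendsto_nhds_unique htu ?_
      simp only [huint1]
      exact tendsto_const_nhds
    constructor
    · refine ⟨?_⟩
      rw [hwdA univ MeasurableSet.univ, Measure.restrict_univ, hinth1]
      simp
    · intro A hA
      rw [hwdA A hA]
      have hcont := (ENNReal.continuous_ofReal.tendsto _).comp (hresA A hA)
      refine hcont.congr fun n => ?_
      rw [Function.comp_apply, ← hρA n A hA]
  refine ⟨⟨?_, ?_⟩, part2⟩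
  · -- forward
    rintro ⟨h, hint, hweak⟩ A hA
    obtain ⟨hprob', htendsto⟩ := part2 h hint hweak
    exact ⟨_, measure_lt_top _ _, htendsto A hA⟩
  · -- backward: Vitali–Hahn–Saks machinery
    intro hset
    have hconv : ∀ A : Set (Fin l → ℝ), MeasurableSet A →
        ∃ c : ℝ, Tendsto (fun n => ∫ x in A, u n x ∂μ) atTop (𝓝 c) := by
      intro A hA
      obtain ⟨c, hc, hcT⟩ := hset A hA
      refine ⟨c.toReal, ?_⟩
      have h1 : Tendsto (fun n => (ρ n A).toReal) atTop (𝓝 c.toReal) :=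
        (ENNReal.tendsto_toReal hc.ne).comp hcT
      refine h1.congr fun n => ?_
      rw [hρA n A hA, ENNReal.toReal_ofReal (setIntegral_nonneg hA fun x _ => hupos n x)]
    obtain ⟨h, hint, hpos, hsetlim⟩ := VHS.exists_limit_density hu hupos hconv
    refine ⟨h, hint, ?_⟩
    intro g hg hgb
    have hhM : ∫ x, h x ∂μ ≤ 1 := by
      have htu := hsetlim univ MeasurableSet.univ
      simp only [Measure.restrict_univ] at htu
      have h2 : ∫ x, h x ∂μ = 1 := by
        refine tendsto_nhds_unique htu ?_
        simp only [huint1]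
        exact tendsto_const_nhds
      exact h2.le
    exact VHS.weak_of_setwise hu hupos hint hpos (fun n => (huint1 n).le) hhM hsetlim g hg hgb
end

section
/- Let (f_n) be a sequence of m-oscillating functions from a nonempty bounded open set Ω ⊂ ℝ^d of Lebesgue measure M > 0 into a common compact set K ⊂ ℝ^d, with total slopes Jt_{f_n}(y) = Σ_{i : y ∈ f_{n,i}(Ω_{n,i})} |det D(f_{n,i}^{-1})(y)|, and with associated (homogeneous) Young measures ρ_n = (f_n)_*λ having densities u_n = (1/M)·Jt_{f_n}. Assume the sequence (Jt_{f_n}) is monotone: for μ-a.e. y ∈ K, the sequence n ↦ Jt_{f_n}(y) is nondecreasing (or, for a.e. y, nonincreasing). Then there exists a probability measure ρ on K, absolutely continuous with respect to Lebesgue measure μ on K with density g ∈ L¹(K, μ), such that ρ_n(A) → ρ(A) for every Borel set A ⊆ K and u_n converges weakly in L¹(K, μ) to g; i.e. the Young measures ρ_n converge weakly to the homogeneous Young measure ρ whose density is the weak L¹ limit of the densities u_n. -/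
/-!
By the density theorem the Young measure `ρₙ` has the density `uₙ ≥ 0` of total mass one, and
monotonicity of the total slopes makes `uₙ` converge a.e. to some `g`. The sequence is dominated:
by `u₀` when it is nonincreasing, and by its supremum `g` when it is nondecreasing, which is
integrable by monotone convergence since all masses are one. Dominated convergence then gives
`∫ uₙ φ → ∫ g φ` for every bounded measurable `φ`; taking `φ = 1_A` gives `ρₙ(A) → ρ(A)`, and
`A` the whole space shows that `ρ` has mass one.
-/

open MeasureTheory Filter Topology Set ENNReal

/-- `f` is an m-oscillating function on `Ω`: `f = fᵢ` on the elements `Ωᵢ` of an (at most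
countable) family of pairwise disjoint open subsets of `Ω` whose closures cover `closure Ω`;
each `fᵢ` maps `Ωᵢ` homeomorphically onto its open image, with local inverse `gᵢ` that is
continuously differentiable on that image. -/
def IsMOscillating {d : ℕ} (Ω : Set (Fin d → ℝ)) (f : (Fin d → ℝ) → (Fin d → ℝ))
    (Ωi : ℕ → Set (Fin d → ℝ)) (fi gi : ℕ → (Fin d → ℝ) → (Fin d → ℝ)) : Prop :=
  (∀ i, IsOpen (Ωi i)) ∧ (∀ i, Ωi i ⊆ Ω) ∧
  (Pairwise fun i j => Disjoint (Ωi i) (Ωi j)) ∧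
  (⋃ i, closure (Ωi i)) = closure Ω ∧
  (∀ i, ContinuousOn (fi i) (Ωi i)) ∧
  (∀ i, IsOpen (fi i '' Ωi i)) ∧
  (∀ i, ∀ x ∈ Ωi i, gi i (fi i x) = x) ∧
  (∀ i, ∀ y ∈ fi i '' Ωi i, fi i (gi i y) = y) ∧
  (∀ i, ContDiffOn ℝ 1 (gi i) (fi i '' Ωi i)) ∧
  (∀ i, ∀ x ∈ Ωi i, f x = fi i x)

/-- The total slope `Jt_f(y) = ∑_{i : y ∈ fᵢ(Ωᵢ)} |det D(fᵢ⁻¹)(y)|` of an m-oscillating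
function. -/
noncomputable def totalSlope {d : ℕ} (Ωi : ℕ → Set (Fin d → ℝ))
    (fi gi : ℕ → (Fin d → ℝ) → (Fin d → ℝ)) (y : Fin d → ℝ) : ℝ :=
  ∑' i, Set.indicator (fi i '' Ωi i) (fun z => |(fderiv ℝ (gi i) z).det|) y

theorem totalSlope_nonneg {d : ℕ} (Ωi : ℕ → Set (Fin d → ℝ))
    (fi gi : ℕ → (Fin d → ℝ) → (Fin d → ℝ)) (y : Fin d → ℝ) : 0 ≤ totalSlope Ωi fi gi y :=
  tsum_nonneg fun _ => indicator_nonneg (fun _ _ => abs_nonneg _) _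

section

variable {X : Type*} [MeasurableSpace X] {μ : Measure X} {u : ℕ → X → ℝ} {g : X → ℝ}

theorem exists_integrable_ae_tendsto_of_monotone (hpos : ∀ n, 0 ≤ u n)
    (hmeas : ∀ n, AEMeasurable (u n) μ) (hmono : ∀ᵐ x ∂μ, Monotone fun n => u n x)
    (hbdd : ⨆ n, ∫⁻ x, ENNReal.ofReal (u n x) ∂μ ≠ ∞) :
    ∃ g : X → ℝ, Integrable g μ ∧ (∀ n, ∀ᵐ x ∂μ, u n x ≤ g x) ∧
      ∀ᵐ x ∂μ, Tendsto (fun n => u n x) atTop (𝓝 (g x)) := by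
  set G : X → ℝ≥0∞ := fun x => ⨆ n, ENNReal.ofReal (u n x)
  have hvmeas n : AEMeasurable (fun x => ENNReal.ofReal (u n x)) μ :=
    ENNReal.measurable_ofReal.comp_aemeasurable (hmeas n)
  have hvmono : ∀ᵐ x ∂μ, Monotone fun n => ENNReal.ofReal (u n x) :=
    hmono.mono fun x hx _ _ hij => ENNReal.ofReal_le_ofReal (hx hij)
  have hGmeas : AEMeasurable G μ := AEMeasurable.iSup hvmeas
  have hGint : ∫⁻ x, G x ∂μ ≠ ∞ := by rwa [lintegral_iSup' hvmeas hvmono]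
  have hGfin : ∀ᵐ x ∂μ, G x ≠ ∞ := (ae_lt_top' hGmeas hGint).mono fun _ hx => hx.ne
  have hu_eq n x : (ENNReal.ofReal (u n x)).toReal = u n x := ENNReal.toReal_ofReal (hpos n x)
  refine ⟨fun x => (G x).toReal, integrable_toReal_of_lintegral_ne_top hGmeas hGint,
    fun n => ?_, ?_⟩
  · filter_upwards [hGfin] with x hx
    rw [← hu_eq]
    exact ENNReal.toReal_mono hx (le_iSup (fun n => ENNReal.ofReal (u n x)) n)
  · filter_upwards [hvmono, hGfin] with x hx hfin
    exact ((ENNReal.tendsto_toReal hfin).comp (tendsto_atTop_iSup hx)).congr fun n => hu_eq n x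

theorem exists_dominated_ae_tendsto_of_monotone_or_antitone (hpos : ∀ n, 0 ≤ u n)
    (hint : ∀ n, Integrable (u n) μ) (hbdd : ⨆ n, ∫⁻ x, ENNReal.ofReal (u n x) ∂μ ≠ ∞)
    (hm : (∀ᵐ x ∂μ, Monotone fun n => u n x) ∨ (∀ᵐ x ∂μ, Antitone fun n => u n x)) :
    ∃ g F : X → ℝ, Integrable F μ ∧ (∀ n, ∀ᵐ x ∂μ, |u n x| ≤ F x) ∧
      ∀ᵐ x ∂μ, Tendsto (fun n => u n x) atTop (𝓝 (g x)) := by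
  rcases hm with hmono | hanti
  · obtain ⟨g, hg, hle, hlim⟩ :=
      exists_integrable_ae_tendsto_of_monotone hpos (fun n => (hint n).aemeasurable) hmono hbdd
    exact ⟨g, g, hg, fun n => (hle n).mono fun x hx => (abs_of_nonneg (hpos n x)).trans_le hx,
      hlim⟩
  · refine ⟨fun x => ⨅ n, u n x, u 0, hint 0, fun n => ?_, ?_⟩
    · filter_upwards [hanti] with x hx
      exact (abs_of_nonneg (hpos n x)).trans_le (hx n.zero_le)
    · filter_upwards [hanti] with x hx
      exact tendsto_atTop_ciInf hx ⟨0, forall_mem_range.2 fun n => hpos n x⟩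

theorem integrable_of_ae_tendsto_of_dominated (hmeas : ∀ n, AEStronglyMeasurable (u n) μ)
    {F : X → ℝ} (hF : Integrable F μ) (hbound : ∀ n, ∀ᵐ x ∂μ, |u n x| ≤ F x)
    (hlim : ∀ᵐ x ∂μ, Tendsto (fun n => u n x) atTop (𝓝 (g x))) : Integrable g μ := by
  refine hF.mono' (aestronglyMeasurable_of_tendsto_ae atTop hmeas hlim) ?_
  filter_upwards [ae_all_iff.2 hbound, hlim] with x hx hgx
  exact le_of_tendsto' (continuous_norm.tendsto _ |>.comp hgx) hx

theorem WeakL1Tendsto.of_ae_tendsto_of_dominated (hmeas : ∀ n, AEStronglyMeasurable (u n) μ)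
    {F : X → ℝ} (hF : Integrable F μ) (hbound : ∀ n, ∀ᵐ x ∂μ, |u n x| ≤ F x)
    (hlim : ∀ᵐ x ∂μ, Tendsto (fun n => u n x) atTop (𝓝 (g x))) : WeakL1Tendsto μ u g := by
  rintro φ hφ ⟨C, hC⟩
  refine tendsto_integral_of_dominated_convergence (fun x => F x * C)
    (fun n => (hmeas n).mul hφ.aestronglyMeasurable) (hF.mul_const C) (fun n => ?_) ?_
  · filter_upwards [hbound n] with x hx
    rw [norm_mul, Real.norm_eq_abs, Real.norm_eq_abs]
    exact mul_le_mul hx (hC x) (abs_nonneg _) ((abs_nonneg _).trans hx)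
  · filter_upwards [hlim] with x hx
    exact hx.mul_const (φ x)

theorem WeakL1Tendsto.tendsto_withDensity_apply (h : WeakL1Tendsto μ u g)
    (hint : ∀ n, Integrable (u n) μ) (hpos : ∀ n, 0 ≤ᵐ[μ] u n) (hg : Integrable g μ)
    (hg_nonneg : 0 ≤ᵐ[μ] g) {A : Set X} (hA : MeasurableSet A) :
    Tendsto (fun n => μ.withDensity (fun x => ENNReal.ofReal (u n x)) A) atTop
      (𝓝 (μ.withDensity (fun x => ENNReal.ofReal (g x)) A)) := by
  have hset {v : X → ℝ} (hv : Integrable v μ) (hv_nonneg : 0 ≤ᵐ[μ] v) :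
      μ.withDensity (fun x => ENNReal.ofReal (v x)) A
        = ENNReal.ofReal (∫ x, v x * A.indicator 1 x ∂μ) := by
    simp_rw [← indicator_mul_right, Pi.one_apply, mul_one, integral_indicator hA,
      withDensity_apply _ hA]
    exact (ofReal_integral_eq_lintegral_ofReal hv.restrict (ae_restrict_of_ae hv_nonneg)).symm
  simp_rw [hset (hint _) (hpos _), hset hg hg_nonneg]
  refine ENNReal.tendsto_ofReal (h _ (measurable_one.indicator hA) ⟨1, fun x => ?_⟩)
  by_cases hx : x ∈ A <;> simp [hx]

theorem exists_weakL1Tendsto_of_monotone_or_antitone (hpos : ∀ n, 0 ≤ u n)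
    (hint : ∀ n, Integrable (u n) μ) (hbdd : ⨆ n, ∫⁻ x, ENNReal.ofReal (u n x) ∂μ ≠ ∞)
    (hm : (∀ᵐ x ∂μ, Monotone fun n => u n x) ∨ (∀ᵐ x ∂μ, Antitone fun n => u n x)) :
    ∃ g : X → ℝ, Integrable g μ ∧ 0 ≤ᵐ[μ] g ∧ WeakL1Tendsto μ u g := by
  obtain ⟨g, F, hF, hbound, hlim⟩ :=
    exists_dominated_ae_tendsto_of_monotone_or_antitone hpos hint hbdd hm
  have hmeas n := (hint n).aestronglyMeasurable
  exact ⟨g, integrable_of_ae_tendsto_of_dominated hmeas hF hbound hlim,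
    hlim.mono fun x hx => ge_of_tendsto' hx fun n => hpos n x,
    WeakL1Tendsto.of_ae_tendsto_of_dominated hmeas hF hbound hlim⟩

end

theorem youngMeasures_weak_conv_of_monotone_totalSlopes_general
    {d : ℕ} (Ω : Set (Fin d → ℝ)) (hΩo : IsOpen Ω) (hΩne : Ω.Nonempty)
    (hΩb : Bornology.IsBounded Ω)
    (lam : Measure (Fin d → ℝ)) (hlam : lam = (volume Ω)⁻¹ • volume.restrict Ω)
    (μ : Measure (Fin d → ℝ))
    (f : ℕ → (Fin d → ℝ) → (Fin d → ℝ))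
    (hfm : ∀ n, Measurable (f n))
    (Ωi : ℕ → ℕ → Set (Fin d → ℝ)) (fi gi : ℕ → ℕ → (Fin d → ℝ) → (Fin d → ℝ))
    (u : ℕ → (Fin d → ℝ) → ℝ)
    (hu : ∀ n y, u n y = (volume Ω).toReal⁻¹ * totalSlope (Ωi n) (fi n) (gi n) y)
    (huint : ∀ n, Integrable (u n) μ)
    (hdens : ∀ n, Measure.map (f n) lam
      = μ.withDensity (fun y => ENNReal.ofReal (u n y)))
    (hmono : (∀ᵐ y ∂μ, Monotone fun n => totalSlope (Ωi n) (fi n) (gi n) y)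
      ∨ (∀ᵐ y ∂μ, Antitone fun n => totalSlope (Ωi n) (fi n) (gi n) y)) :
    ∃ g : (Fin d → ℝ) → ℝ, Integrable g μ ∧ 0 ≤ᵐ[μ] g ∧
      IsProbabilityMeasure (μ.withDensity (fun y => ENNReal.ofReal (g y)))
      ∧ (∀ A : Set (Fin d → ℝ), MeasurableSet A →
          Tendsto (fun n => Measure.map (f n) lam A) atTop
            (nhds (μ.withDensity (fun y => ENNReal.ofReal (g y)) A)))
      ∧ WeakL1Tendsto μ u g := by
  have hlam_prob : IsProbabilityMeasure lam := hlam ▸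
    ProbabilityTheory.cond_isProbabilityMeasure_of_finite (hΩo.measure_pos volume hΩne).ne'
      hΩb.measure_lt_top.ne
  have hmass n : Measure.map (f n) lam univ = 1 :=
    (Measure.isProbabilityMeasure_map (hfm n).aemeasurable).measure_univ
  have hc : 0 ≤ (volume Ω).toReal⁻¹ := inv_nonneg.2 toReal_nonneg
  have hpos n : 0 ≤ u n := fun y => hu n y ▸ mul_nonneg hc (totalSlope_nonneg _ _ _ _)
  have hm : (∀ᵐ y ∂μ, Monotone fun n => u n y) ∨ (∀ᵐ y ∂μ, Antitone fun n => u n y) := by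
    simp_rw [hu]
    exact hmono.imp (·.mono fun _ hy => hy.const_mul hc) (·.mono fun _ hy => hy.const_mul hc)
  have hbdd : ⨆ n, ∫⁻ y, ENNReal.ofReal (u n y) ∂μ ≠ ∞ := by
    have hone n : ∫⁻ y, ENNReal.ofReal (u n y) ∂μ = 1 := by
      rw [← hmass n, hdens, withDensity_apply _ MeasurableSet.univ, setLIntegral_univ]
    simp [hone]
  obtain ⟨g, hg, hg_nonneg, hweak⟩ :=
    exists_weakL1Tendsto_of_monotone_or_antitone hpos huint hbdd hm
  have hset A (hA : MeasurableSet A) : Tendsto (fun n => Measure.map (f n) lam A) atTop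
      (𝓝 (μ.withDensity (fun y => ENNReal.ofReal (g y)) A)) := by
    simp_rw [hdens]
    exact hweak.tendsto_withDensity_apply huint (fun n => ae_of_all _ (hpos n)) hg hg_nonneg hA
  refine ⟨g, hg, hg_nonneg, ⟨tendsto_nhds_unique (hset univ MeasurableSet.univ) ?_⟩, hset, hweak⟩
  simpa only [hmass] using tendsto_const_nhds

/-- Let `(fₙ)` be a sequence of m-oscillating functions from a nonempty bounded open
`Ω ⊂ ℝᵈ` into a compact set `K ⊂ ℝᵈ`, whose associated homogeneous Young measures
`ρₙ = (fₙ)_*λ` have densities `uₙ = (1/M)·Jt_{fₙ}` with respect to Lebesgue measure `μ` on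
`K`. If the sequence of total slopes `(Jt_{fₙ})` is monotone (a.e. nondecreasing or a.e.
nonincreasing), then the Young measures `ρₙ` converge weakly to a homogeneous Young measure
`ρ`: there is a probability measure `ρ = μ.withDensity g` with density `g ∈ L¹(K, μ)` such
that `ρₙ(A) → ρ(A)` for every Borel `A ⊆ K` and `uₙ ⇀ g` weakly in `L¹(K, μ)`. -/
theorem youngMeasures_weak_conv_of_monotone_totalSlopes
    {d : ℕ} (Ω : Set (Fin d → ℝ)) (hΩo : IsOpen Ω) (hΩne : Ω.Nonempty)
    (hΩb : Bornology.IsBounded Ω)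
    (K : Set (Fin d → ℝ)) (hK : IsCompact K)
    (lam : Measure (Fin d → ℝ)) (hlam : lam = (volume Ω)⁻¹ • volume.restrict Ω)
    (μ : Measure (Fin d → ℝ)) (hμ : μ = volume.restrict K)
    (f : ℕ → (Fin d → ℝ) → (Fin d → ℝ))
    (hfm : ∀ n, Measurable (f n)) (hfK : ∀ n, ∀ x ∈ Ω, f n x ∈ K)
    (Ωi : ℕ → ℕ → Set (Fin d → ℝ)) (fi gi : ℕ → ℕ → (Fin d → ℝ) → (Fin d → ℝ))
    (hosc : ∀ n, IsMOscillating Ω (f n) (Ωi n) (fi n) (gi n))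
    (u : ℕ → (Fin d → ℝ) → ℝ)
    (hu : ∀ n y, u n y = (volume Ω).toReal⁻¹ * totalSlope (Ωi n) (fi n) (gi n) y)
    (huint : ∀ n, Integrable (u n) μ)
    (hdens : ∀ n, Measure.map (f n) lam
      = μ.withDensity (fun y => ENNReal.ofReal (u n y)))
    (hmono : (∀ᵐ y ∂μ, Monotone fun n => totalSlope (Ωi n) (fi n) (gi n) y)
      ∨ (∀ᵐ y ∂μ, Antitone fun n => totalSlope (Ωi n) (fi n) (gi n) y)) :
    ∃ g : (Fin d → ℝ) → ℝ, Integrable g μ ∧ 0 ≤ᵐ[μ] g ∧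
      IsProbabilityMeasure (μ.withDensity (fun y => ENNReal.ofReal (g y)))
      ∧ (∀ A : Set (Fin d → ℝ), MeasurableSet A →
          Tendsto (fun n => Measure.map (f n) lam A) atTop
            (nhds (μ.withDensity (fun y => ENNReal.ofReal (g y)) A)))
      ∧ WeakL1Tendsto μ u g :=
  youngMeasures_weak_conv_of_monotone_totalSlopes_general Ω hΩo hΩne hΩb lam hlam μ f hfm Ωi fi gi u
    hu huint hdens hmono
end
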